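/- Every closed →f-normal term of the fireball calculus is a fireball. -/
import Mathlib


/-- Terms of the fireball calculus (FBC): variables, symbols, abstractions, applications. -/
inductive Term : Type
  | var : ℕ → Term
  | sym : ℕ → Term
  | lam : ℕ → Term → Term
  | app : Term → Term → Term

/-- Free variables of a term (symbols do not count as variables). -/
def Term.fv : Term → Finset ℕ
  | .var x => {x}
  | .sym _ => ∅
  | .lam x t => Term.fv t \ {x}
  | .app t u => Term.fv t ∪ Term.fv u

/-- A term is closed when it has no free variables. -/
def Term.Closed (t : Term) : Prop := Term.fv t = ∅

/-- Capture-avoiding substitution `t{x:=u}` (under the convention that bound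
variables are renamed apart, substitution proceeds structurally, stopping at
binders for `x`). -/
def Term.subst (x : ℕ) (u : Term) : Term → Term
  | .var y => if y = x then u else .var y
  | .sym a => .sym a
  | .lam y t => if y = x then .lam y t else .lam y (Term.subst x u t)
  | .app t s => .app (Term.subst x u t) (Term.subst x u s)

mutual
  /-- Inerts: a symbol applied to zero or more fireballs. -/
  inductive Inert : Term → Prop
    | sym : ∀ a : ℕ, Inert (Term.sym a)
    | app : ∀ t f : Term, Inert t → Fireball f → Inert (Term.app t f)
  /-- Fireballs: values (abstractions) or inerts. -/
  inductive Fireball : Term → Prop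
    | val : ∀ (x : ℕ) (t : Term), Fireball (Term.lam x t)
    | inert : ∀ t : Term, Inert t → Fireball t
end

/-- Contexts with one hole, of the shape E ::= ⟨·⟩ | t E | E t. -/
inductive Ctx : Type
  | hole : Ctx
  | appR : Term → Ctx → Ctx
  | appL : Ctx → Term → Ctx

/-- Plugging a term in a context. -/
def Ctx.plug : Ctx → Term → Term
  | .hole, t => t
  | .appR u E, t => Term.app u (Ctx.plug E t)
  | .appL E f, t => Term.app (Ctx.plug E t) f

/-- Evaluation contexts E ::= ⟨·⟩ | t E | E f, where f must be a fireball. -/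
inductive Ctx.Eval : Ctx → Prop
  | hole : Ctx.Eval Ctx.hole
  | appR : ∀ (t : Term) (E : Ctx), Ctx.Eval E → Ctx.Eval (Ctx.appR t E)
  | appL : ∀ (E : Ctx) (f : Term), Ctx.Eval E → Fireball f → Ctx.Eval (Ctx.appL E f)

/-- The fireball reduction →f : E⟨(λx.t) f⟩ →f E⟨t{x:=f}⟩ with f a fireball. -/
inductive Step : Term → Term → Prop
  | fire : ∀ (E : Ctx) (x : ℕ) (t f : Term), Ctx.Eval E → Fireball f →
      Step (Ctx.plug E (Term.app (Term.lam x t) f)) (Ctx.plug E (Term.subst x f t))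

theorem step_appR {u u' : Term} (t : Term) (h : Step u u') :
    Step (Term.app t u) (Term.app t u') := by
  cases h with
  | fire E x b f hE hf =>
      exact Step.fire (Ctx.appR t E) x b f (Ctx.Eval.appR t E hE) hf

theorem step_appL {t t' : Term} (u : Term) (hu : Fireball u) (h : Step t t') :
    Step (Term.app t u) (Term.app t' u) := by
  cases h with
  | fire E x b f hE hf =>
      exact Step.fire (Ctx.appL E u) x b f (Ctx.Eval.appL E u hE hu) hf

/-- every closed →f-normal term is a fireball. -/
theorem closed_normal_is_fireball (t : Term) (hc : Term.Closed t)
    (hn : ∀ u, ¬ Step t u) : Fireball t := by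
  induction t with
  | var x =>
      exfalso
      simp [Term.Closed, Term.fv] at hc
  | sym a => exact Fireball.inert _ (Inert.sym a)
  | lam x b => exact Fireball.val x b
  | app t u iht ihu =>
      have hc' : Term.Closed t ∧ Term.Closed u := by
        simp [Term.Closed, Term.fv, Finset.union_eq_empty] at hc
        exact ⟨hc.1, hc.2⟩
      have hfu : Fireball u :=
        ihu hc'.2 (fun u' hs => hn _ (step_appR t hs))
      have hft : Fireball t :=
        iht hc'.1 (fun t' hs => hn _ (step_appL u hfu hs))
      cases hft with
      | val x b =>
          exact absurd (Step.fire Ctx.hole x b u Ctx.Eval.hole hfu) (hn _)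
      | inert _ hi => exact Fireball.inert _ (Inert.app t u hi hfu)
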